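/- arXiv:2004.09549 — 2 statements merged into one kernel-verified Lean document; each statement's English description precedes it below -/
import Mathlib

section
/- For every ν_max > 2 there exists a constant κ₂ > 0 (depending only on ν_max) such that the following holds: for every δ ∈ (0,1/2) and every ν with 2 + δ < ν ≤ ν_max, there exists M₀ such that for all M ≥ M₀, E_{2,M}(ν) ≥ 1 − (2M)^{−κ₂δ²} / (δ·√(ln(2M))). -/
open MeasureTheory ProbabilityTheory Finset

noncomputable section

/-- The `k`-th symbol of the K-PSK constellation, `π_k = exp(i·2πk/K)`. -/
def psk (K k : ℕ) : ℂ := Complex.exp (2 * (Real.pi : ℂ) * Complex.I * (k : ℂ) / (K : ℂ))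

/-- Law of `(U₁, (U₂,…,U_M))` where `U_j = U_j^R + i·U_j^I` with all real/imaginary parts
i.i.d. standard Gaussian `N(0,1)` (so each `U_j ~ CN(0,2)`): the first factor carries the
real and imaginary parts of `U₁`, the second the real and imaginary parts of `U₂,…,U_M`. -/
def seMeasure (M : ℕ) :
    Measure ((ℝ × ℝ) × ((Fin (M - 1) → ℝ) × (Fin (M - 1) → ℝ))) :=
  ((gaussianReal 0 1).prod (gaussianReal 0 1)).prod
    ((Measure.pi fun _ => gaussianReal 0 1).prod (Measure.pi fun _ => gaussianReal 0 1))

/-- The state-evolution functional `E_{K,M}(ν) = E[N/D]`, with `μ = ν·ln(KM)`,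
`N = ∑_{k=1}^K Re(π_k)·exp(μ Re(π_k) + √μ Re(U₁ conj(π_k)))` and
`D = ∑_{a=1}^K exp(μ Re(π_a) + √μ Re(U₁ conj(π_a)))
   + ∑_{j=2}^M ∑_{b=1}^K exp(√μ Re(U_j conj(π_b)))`,
where `U₁,…,U_M` are i.i.d. `CN(0,2)`. -/
def EKM (K M : ℕ) (ν : ℝ) : ℝ :=
  ∫ u, (∑ k ∈ Finset.Icc 1 K, (psk K k).re *
          Real.exp (ν * Real.log ((K : ℝ) * M) * (psk K k).re +
            Real.sqrt (ν * Real.log ((K : ℝ) * M)) *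
              (((u.1.1 : ℂ) + (u.1.2 : ℂ) * Complex.I) * (starRingEnd ℂ) (psk K k)).re)) /
       ((∑ a ∈ Finset.Icc 1 K,
          Real.exp (ν * Real.log ((K : ℝ) * M) * (psk K a).re +
            Real.sqrt (ν * Real.log ((K : ℝ) * M)) *
              (((u.1.1 : ℂ) + (u.1.2 : ℂ) * Complex.I) * (starRingEnd ℂ) (psk K a)).re)) +
        ∑ j : Fin (M - 1), ∑ b ∈ Finset.Icc 1 K,
          Real.exp (Real.sqrt (ν * Real.log ((K : ℝ) * M)) *
            (((u.2.1 j : ℂ) + (u.2.2 j : ℂ) * Complex.I) * (starRingEnd ℂ) (psk K b)).re))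
    ∂(seMeasure M)

/-! For `K = 2` the imaginary parts drop out and the integrand is
`(e^t - e^{-t}) / (e^t + e^{-t} + S)` with `t = μ + √μ U₁ᴿ` and `S = ∑_{j ≥ 2} 2 cosh (√μ U_jᴿ)`.
This ratio is always `≥ -1`, and when `U₁ᴿ > -s` its defect from `1` is at most
`2 e^{-2(μ - √μ s)} + e^{-(μ - √μ s)} S`. Taking expectations needs only the Gaussian moment
generating function (no independence), and gives
`E ≥ 1 - 2 e^{-s²/2} - 2 e^{-2(μ - √μ s)} - 2(M - 1) e^{μ/2 - (μ - √μ s)}`.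
With `√μ s = δ ln(2M)/4` and `ν > 2 + δ`, each error term is at most `(2M)^{-δ²/(32 ν_max)}`;
halving the exponent absorbs the factor `δ √(ln 2M)` for large `M`. -/

open Real Filter

def bpskRatio (t S : ℝ) : ℝ := (exp t - exp (-t)) / (exp t + exp (-t) + S)

section bpskRatio

variable {t S : ℝ}

lemma abs_bpskRatio_le_one (hS : 0 ≤ S) : |bpskRatio t S| ≤ 1 := by
  have hA := exp_pos t
  have hB := exp_pos (-t)
  rw [bpskRatio, abs_le, le_div_iff₀ (by linarith), div_le_iff₀ (by linarith)]
  constructor <;> linarith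

lemma one_sub_bpskRatio_le (hS : 0 ≤ S) :
    1 - bpskRatio t S ≤ 2 * exp (-2 * t) + exp (-t) * S := by
  have hA := exp_pos t
  have hB := exp_pos (-t)
  calc 1 - bpskRatio t S = (2 * exp (-t) + S) / (exp t + exp (-t) + S) := by
        rw [bpskRatio]; field_simp; ring
    _ ≤ (2 * exp (-t) + S) / exp t := by gcongr; linarith
    _ = 2 * exp (-2 * t) + exp (-t) * S := by
        rw [div_eq_mul_inv, ← exp_neg, show -2 * t = -t + -t by ring, exp_add]; ring

/-- The first term `2 e^{-s²} e^{-s x}` is a Chernoff-type majorant of `2 · 1{x ≤ -s}`, so that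
its expectation is given by the Gaussian moment generating function. -/
lemma one_sub_bpskRatio_le_of_threshold {m c s x : ℝ} (hS : 0 ≤ S) (hc : 0 ≤ c)
    (hs : 0 ≤ s) :
    1 - bpskRatio (m + c * x) S
      ≤ 2 * exp (-s ^ 2) * exp (-s * x) + 2 * exp (-2 * (m - c * s))
        + exp (-(m - c * s)) * S := by
  have hrest : 0 ≤ 2 * exp (-2 * (m - c * s)) + exp (-(m - c * s)) * S := by positivity
  rcases le_or_gt x (-s) with hx | hx
  · have hfar : 1 ≤ exp (-s ^ 2) * exp (-s * x) := by
      rw [← exp_add]; exact one_le_exp (by nlinarith)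
    have := (abs_le.1 (abs_bpskRatio_le_one (t := m + c * x) hS)).1
    linarith
  · have hmono : 2 * exp (-2 * (m + c * x)) + exp (-(m + c * x)) * S
        ≤ 2 * exp (-2 * (m - c * s)) + exp (-(m - c * s)) * S := by
      have hcx : c * -s ≤ c * x := mul_le_mul_of_nonneg_left hx.le hc
      have h1 : exp (-2 * (m + c * x)) ≤ exp (-2 * (m - c * s)) := exp_le_exp.2 (by linarith)
      have h2 : exp (-(m + c * x)) ≤ exp (-(m - c * s)) := exp_le_exp.2 (by linarith)
      nlinarith [mul_le_mul_of_nonneg_right h2 hS]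
    have := one_sub_bpskRatio_le (t := m + c * x) hS
    nlinarith [exp_pos (-s ^ 2), exp_pos (-s * x)]

end bpskRatio

section GaussianMarginals

variable {Ω ι : Type*} [MeasurableSpace Ω] [Fintype ι] {P : Measure Ω} [IsProbabilityMeasure P]
  {X : Ω → ℝ} {Y : ι → Ω → ℝ}

lemma integrable_exp_mul_of_map_eq_gaussianReal {μ : ℝ} {v : NNReal}
    (hX : P.map X = gaussianReal μ v) (t : ℝ) :
    Integrable (fun ω => exp (t * X ω)) P :=
  mgf_pos_iff.1 (by rw [mgf_gaussianReal hX]; positivity)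

lemma one_sub_le_integral_bpskRatio (hX : P.map X = gaussianReal 0 1)
    (hY : ∀ j, P.map (Y j) = gaussianReal 0 1) {m c s : ℝ} (hc : 0 ≤ c) (hs : 0 ≤ s) :
    1 - (2 * exp (-s ^ 2 / 2) + 2 * exp (-2 * (m - c * s))
        + 2 * Fintype.card ι * exp (c ^ 2 / 2 - (m - c * s)))
      ≤ ∫ ω, bpskRatio (m + c * X ω) (∑ j, (exp (-c * Y j ω) + exp (c * Y j ω)))
          ∂P := by
  have hmgf : ∀ {Z : Ω → ℝ}, P.map Z = gaussianReal 0 1 → ∀ t,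
      ∫ ω, exp (t * Z ω) ∂P = exp (t ^ 2 / 2) := fun hZ t =>
    (mgf_gaussianReal hZ t).trans (by simp)
  set S : Ω → ℝ := fun ω => ∑ j, (exp (-c * Y j ω) + exp (c * Y j ω)) with hS_def
  have hS_nonneg : ∀ ω, 0 ≤ S ω := fun ω => by positivity
  have hterm_int : ∀ j, Integrable (fun ω => exp (-c * Y j ω) + exp (c * Y j ω)) P :=
    fun j => (integrable_exp_mul_of_map_eq_gaussianReal (hY j) _).add
      (integrable_exp_mul_of_map_eq_gaussianReal (hY j) _)
  have hS_int : Integrable S P := integrable_finsetSum _ fun j _ => hterm_int j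
  have hS_integral : ∫ ω, S ω ∂P = Fintype.card ι * (2 * exp (c ^ 2 / 2)) := by
    simp only [hS_def]
    rw [integral_finsetSum _ fun j _ => hterm_int j]
    simp only [integral_add (integrable_exp_mul_of_map_eq_gaussianReal (hY _) _)
      (integrable_exp_mul_of_map_eq_gaussianReal (hY _) _), hmgf (hY _), neg_sq, sum_const,
      card_univ, nsmul_eq_mul]
    ring
  have hratio_int : Integrable (fun ω => bpskRatio (m + c * X ω) (S ω)) P := by
    have hXm : AEMeasurable X P := aemeasurable_of_map_neZero (by rw [hX]; infer_instance)
    have hYm : ∀ j, AEMeasurable (Y j) P :=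
      fun j => aemeasurable_of_map_neZero (by rw [hY j]; infer_instance)
    have hratio_meas : Measurable (Function.uncurry bpskRatio) := by
      unfold bpskRatio; fun_prop
    have harg_meas : AEMeasurable (fun ω => (m + c * X ω, S ω)) P := by fun_prop
    exact .of_bound (hratio_meas.comp_aemeasurable harg_meas).aestronglyMeasurable 1
      (ae_of_all _ fun ω => abs_bpskRatio_le_one (hS_nonneg ω))
  have htail_int : Integrable (fun ω => 2 * exp (-s ^ 2) * exp (-s * X ω)) P :=
    (integrable_exp_mul_of_map_eq_gaussianReal hX _).const_mul _
  have hnear_int : Integrable (fun ω => 2 * exp (-s ^ 2) * exp (-s * X ω)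
      + 2 * exp (-2 * (m - c * s))) P := htail_int.add (integrable_const _)
  have hbound_int : Integrable (fun ω => 2 * exp (-s ^ 2) * exp (-s * X ω)
      + 2 * exp (-2 * (m - c * s)) + exp (-(m - c * s)) * S ω) P :=
    hnear_int.add (hS_int.const_mul _)
  calc 1 - (2 * exp (-s ^ 2 / 2) + 2 * exp (-2 * (m - c * s))
        + 2 * Fintype.card ι * exp (c ^ 2 / 2 - (m - c * s)))
      = ∫ ω, (1 - (2 * exp (-s ^ 2) * exp (-s * X ω) + 2 * exp (-2 * (m - c * s))
          + exp (-(m - c * s)) * S ω)) ∂P := by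
        rw [integral_sub (integrable_const _) hbound_int,
          integral_add hnear_int (hS_int.const_mul _),
          integral_add htail_int (integrable_const _), integral_const_mul, hmgf hX,
          integral_const_mul (exp (-(m - c * s))), hS_integral]
        simp only [integral_const, probReal_univ, one_smul, neg_sq]
        rw [show -s ^ 2 / 2 = -s ^ 2 + s ^ 2 / 2 by ring, exp_add,
          show c ^ 2 / 2 - (m - c * s) = -(m - c * s) + c ^ 2 / 2 by ring, exp_add]
        ring
    _ ≤ ∫ ω, bpskRatio (m + c * X ω) (S ω) ∂P :=
        integral_mono ((integrable_const _).sub hbound_int) hratio_int fun ω => by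
          linarith [one_sub_bpskRatio_le_of_threshold (m := m) (x := X ω) (hS_nonneg ω) hc hs]

end GaussianMarginals

instance (M : ℕ) : IsProbabilityMeasure (seMeasure M) := by
  unfold seMeasure; infer_instance

lemma map_seMeasure_fst_fst (M : ℕ) :
    (seMeasure M).map (fun u => u.1.1) = gaussianReal 0 1 :=
  (measurePreserving_fst.comp measurePreserving_fst).map_eq

lemma map_seMeasure_snd_fst_apply (M : ℕ) (j : Fin (M - 1)) :
    (seMeasure M).map (fun u => u.2.1 j) = gaussianReal 0 1 :=
  ((measurePreserving_eval _ j).comp (measurePreserving_fst.comp measurePreserving_snd)).map_eq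

lemma psk_two_one : psk 2 1 = -1 := by
  rw [psk, show 2 * (π : ℂ) * Complex.I * ((1 : ℕ) : ℂ) / ((2 : ℕ) : ℂ)
      = π * Complex.I by push_cast; ring,
    Complex.exp_pi_mul_I]

lemma psk_two_two : psk 2 2 = 1 := by
  rw [psk, show 2 * (π : ℂ) * Complex.I * ((2 : ℕ) : ℂ) / ((2 : ℕ) : ℂ)
      = 2 * π * Complex.I by push_cast; ring,
    Complex.exp_two_pi_mul_I]

lemma EKM_two_eq (M : ℕ) (ν : ℝ) :
    EKM 2 M ν = ∫ u, bpskRatio (ν * log (2 * M) + √(ν * log (2 * M)) * u.1.1)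
      (∑ j, (exp (-√(ν * log (2 * M)) * u.2.1 j) + exp (√(ν * log (2 * M)) * u.2.1 j)))
      ∂(seMeasure M) := by
  unfold EKM bpskRatio
  congr 1 with u
  simp only [show Finset.Icc 1 2 = {1, 2} from rfl,
    Finset.sum_insert (by decide : 1 ∉ ({2} : Finset ℕ)), Finset.sum_singleton, psk_two_one,
    psk_two_two, map_neg, map_one, mul_neg, mul_one, Complex.neg_re, Complex.add_re,
    Complex.ofReal_re, Complex.mul_re, Complex.I_re, Complex.I_im, Complex.ofReal_im,
    Complex.one_re, Complex.neg_im, Complex.one_im, neg_zero, mul_zero, sub_zero, Nat.cast_ofNat]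
  ring_nf

lemma one_sub_five_exp_le_EKM_two {M : ℕ} (hM : 1 ≤ M) {δ ν νmax : ℝ} (hδ : 0 < δ)
    (hδν : 2 + δ < ν) (hννmax : ν ≤ νmax) :
    1 - 5 * exp (-(δ ^ 2 / (32 * νmax) * log (2 * M))) ≤ EKM 2 M ν := by
  set L := log (2 * M)
  set a := δ ^ 2 / (32 * νmax)
  have hL : 0 < L := log_pos (by norm_cast; omega)
  have hν : 0 < ν := by linarith
  set c := √(ν * L)
  have hc : 0 < c := sqrt_pos.2 (by positivity)
  have hc2 : c ^ 2 = ν * L := sq_sqrt (by positivity)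
  set s := δ * L / (4 * c)
  have hcs : c * s = δ * L / 4 := by
    change c * (δ * L / (4 * c)) = _; field_simp
  have hs2 : -s ^ 2 / 2 = -(δ ^ 2 / (32 * ν) * L) := by
    change -(δ * L / (4 * c)) ^ 2 / 2 = _
    rw [div_pow, mul_pow, mul_pow, hc2]; field_simp; ring
  have hbound := one_sub_le_integral_bpskRatio (m := ν * L) (map_seMeasure_fst_fst M)
    (map_seMeasure_snd_fst_apply M) hc.le (by positivity : 0 ≤ s)
  rw [← EKM_two_eq, Fintype.card_fin, hcs, hs2, hc2] at hbound
  refine le_trans ?_ hbound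
  have ha_le : a ≤ δ ^ 2 / (32 * ν) := by simp only [a]; gcongr
  have ha_quarter : a ≤ δ / 4 :=
    ha_le.trans (by rw [div_le_div_iff₀ (by positivity) (by norm_num)]; nlinarith)
  have h_tail : exp (-(δ ^ 2 / (32 * ν) * L)) ≤ exp (-(a * L)) :=
    exp_le_exp.2 (neg_le_neg (mul_le_mul_of_nonneg_right ha_le hL.le))
  have h_near : exp (-2 * (ν * L - δ * L / 4)) ≤ exp (-(a * L)) :=
    exp_le_exp.2 (by nlinarith [mul_le_mul_of_nonneg_right ha_quarter hL.le])
  have h_far :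
      2 * ((M - 1 : ℕ) : ℝ) * exp (ν * L / 2 - (ν * L - δ * L / 4)) ≤ exp (-(a * L)) :=
    calc 2 * ((M - 1 : ℕ) : ℝ) * exp (ν * L / 2 - (ν * L - δ * L / 4))
        ≤ exp L * exp (ν * L / 2 - (ν * L - δ * L / 4)) := by
          gcongr
          rw [exp_log (by positivity), Nat.cast_sub hM]
          linarith
      _ = exp ((1 - ν / 2 + δ / 4) * L) := by rw [← exp_add]; ring_nf
      _ ≤ exp (-(a * L)) :=
          exp_le_exp.2 (by nlinarith [mul_le_mul_of_nonneg_right ha_quarter hL.le])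
  linarith

lemma eventually_five_exp_neg_mul_le {a δ : ℝ} (ha : 0 < a) (hδ : 0 < δ) :
    ∀ᶠ L in atTop, 5 * exp (-(a * L)) ≤ exp (-(a / 2 * L)) / (δ * √L) := by
  have hdecay := (tendsto_rpow_mul_exp_neg_mul_atTop_nhds_zero (1 / 2) (a / 2)
    (by positivity)).const_mul (5 * δ)
  rw [mul_zero] at hdecay
  filter_upwards [hdecay.eventually (gt_mem_nhds one_pos), eventually_gt_atTop 0]
    with L hsmall hL
  rw [← sqrt_eq_rpow] at hsmall
  rw [le_div_iff₀ (by positivity)]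
  calc 5 * exp (-(a * L)) * (δ * √L)
      = 5 * δ * (√L * exp (-(a / 2) * L)) * exp (-(a / 2 * L)) := by
        rw [mul_assoc (5 * δ), mul_assoc √L, ← exp_add]; ring_nf
    _ ≤ exp (-(a / 2 * L)) := by
        nlinarith [exp_pos (-(a / 2 * L))]

/-- **`E_{2,M}(ν)` approaches 1 when `ν > 2 + δ`** (BPSK case). For every `ν_max > 2`
there is `κ₂ > 0` (depending only on `ν_max`) such that for every `δ ∈ (0,1/2)` and every
`ν ∈ (2+δ, ν_max]`, for all sufficiently large `M`:
`E_{2,M}(ν) ≥ 1 − (2M)^{−κ₂δ²}/(δ√(ln(2M)))`. -/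
theorem EKM_two_lower_bound_large_nu (νmax : ℝ) (hνmax : 2 < νmax) :
    ∃ κ₂ : ℝ, 0 < κ₂ ∧
      ∀ δ : ℝ, 0 < δ → δ < 1/2 →
      ∀ ν : ℝ, 2 + δ < ν → ν ≤ νmax →
      ∃ M₀ : ℕ, ∀ M : ℕ, M₀ ≤ M →
        1 - ((2 : ℝ) * M) ^ (-(κ₂ * δ ^ 2)) / (δ * Real.sqrt (Real.log ((2 : ℝ) * M)))
          ≤ EKM 2 M ν := by
  refine ⟨1 / (64 * νmax), by positivity, fun δ hδ _ ν hδν hννmax => ?_⟩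
  have ha : 0 < δ ^ 2 / (32 * νmax) := by positivity
  have hlog : Tendsto (fun M : ℕ => log (2 * M)) atTop atTop :=
    tendsto_log_atTop.comp (tendsto_natCast_atTop_atTop.const_mul_atTop two_pos)
  obtain ⟨M₀, hM₀⟩ := eventually_atTop.1 ((hlog.eventually
    (eventually_five_exp_neg_mul_le ha hδ)).and (eventually_ge_atTop 1))
  refine ⟨M₀, fun M hM => ?_⟩
  obtain ⟨hsmall, hM1⟩ := hM₀ M hM
  have hrpow : ((2 : ℝ) * M) ^ (-(1 / (64 * νmax) * δ ^ 2))
      = exp (-(δ ^ 2 / (32 * νmax) / 2 * log (2 * M))) := by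
    rw [rpow_def_of_pos (by positivity)]; ring_nf
  rw [hrpow]
  linarith [one_sub_five_exp_le_EKM_two hM1 hδ hδν hννmax]
end
end

section
/- Let K ≥ 4 be a power of 2 and let κ̃ ∈ (0,2). Then there exists a constant α_K > 0 (depending only on K and κ̃) such that for every δ̃ ∈ (0,1) with κ̃ ≤ 2 − δ̃ and every ν with κ̃ ≤ ν < 2 − δ̃, there exists M₀ such that for all M ≥ M₀, E_{K,M}(ν) ≤ M^{−α_K·δ̃²}. -/
open MeasureTheory ProbabilityTheory Finset

noncomputable section

/-!
Split the sample space along two events: `A`, where every correlation `Re(U₁ conj π_k)` is at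
most `t`, and `B`, where some interferer has `Re U_j ≥ s`. On `A ∩ B` the numerator is at most
`K e^{μ + √μ t}` and the denominator at least `e^{√μ s}`, while `N / D ≤ 1` everywhere. A
sub-Gaussian Chernoff bound gives `P(Aᶜ) ≤ K e^{-t²/2}`, and `P(Bᶜ) = P(Z < s)^{M-1}` is
negligible as soon as `s² < 2 log M`. Take `x = log (KM)`, `t = θ√x`, `s = (√2 - θ)√x` with
`θ = √κ̃ δ̃ / 12`: the gap `√2 - √ν ≥ δ̃ / 3` makes the exponent `μ + √μ (t - s)` at most `-θx`,
so all three terms are `O(M^{-θ²/2})`.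
-/

open Real
open scoped NNReal

lemma psk_eq_exp (K k : ℕ) : psk K k = Complex.exp ((2 * π * k / K : ℝ) * Complex.I) := by
  rw [psk]; push_cast; ring_nf

lemma psk_re (K k : ℕ) : (psk K k).re = cos (2 * π * k / K) := by
  rw [psk_eq_exp, Complex.exp_ofReal_mul_I_re]

lemma psk_im (K k : ℕ) : (psk K k).im = sin (2 * π * k / K) := by
  rw [psk_eq_exp, Complex.exp_ofReal_mul_I_im]

lemma psk_re_sq_add_im_sq (K k : ℕ) : (psk K k).re ^ 2 + (psk K k).im ^ 2 = 1 := by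
  rw [psk_re, psk_im, cos_sq_add_sin_sq]

lemma psk_re_le_one (K k : ℕ) : (psk K k).re ≤ 1 := by
  rw [psk_re]; exact cos_le_one _

lemma abs_psk_re_le_one (K k : ℕ) : |(psk K k).re| ≤ 1 := by
  rw [psk_re]; exact abs_cos_le_one _

lemma psk_self {K : ℕ} (hK : K ≠ 0) : psk K K = 1 := by
  rw [psk, mul_div_assoc, div_self (by exact_mod_cast hK), mul_one, Complex.exp_two_pi_mul_I]

lemma re_mul_conj_psk (K k : ℕ) (x y : ℝ) :
    (((x : ℂ) + y * Complex.I) * (starRingEnd ℂ) (psk K k)).re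
      = x * (psk K k).re + y * (psk K k).im := by
  simp [Complex.mul_re]

namespace ProbabilityTheory

lemma hasSubgaussianMGF_gaussianReal (v : ℝ≥0) :
    HasSubgaussianMGF (fun x ↦ x) v (gaussianReal 0 v) where
  integrable_exp_mul := integrable_exp_mul_gaussianReal
  mgf_le t := by simp [mgf_fun_id_gaussianReal]

section Prod

variable {Ω Ω' : Type*} [MeasurableSpace Ω] [MeasurableSpace Ω'] {μ : Measure Ω}
  {μ' : Measure Ω'} {X : Ω → ℝ} {X' : Ω' → ℝ} {c : ℝ≥0}

lemma HasSubgaussianMGF.comp_fst [IsProbabilityMeasure μ'] (h : HasSubgaussianMGF X c μ) :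
    HasSubgaussianMGF (fun p ↦ X p.1) c (μ.prod μ') :=
  HasSubgaussianMGF.of_map measurable_fst.aemeasurable (by simpa using h)

lemma HasSubgaussianMGF.comp_snd [IsProbabilityMeasure μ] [SFinite μ']
    (h : HasSubgaussianMGF X' c μ') : HasSubgaussianMGF (fun p ↦ X' p.2) c (μ.prod μ') :=
  HasSubgaussianMGF.of_map measurable_snd.aemeasurable
    (by rwa [Measure.map_snd_prod, measure_univ, one_smul])

end Prod

lemma measureReal_mul_add_mul_ge_le {a b : ℝ} (hab : a ^ 2 + b ^ 2 = 1) {t : ℝ} (ht : 0 ≤ t) :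
    ((gaussianReal 0 1).prod (gaussianReal 0 1)).real {p | t ≤ p.1 * a + p.2 * b}
      ≤ exp (-t ^ 2 / 2) := by
  have hX := ((hasSubgaussianMGF_gaussianReal 1).const_mul a).comp_fst (μ' := gaussianReal 0 1)
  have hY := ((hasSubgaussianMGF_gaussianReal 1).const_mul b).comp_snd (μ := gaussianReal 0 1)
  have h := (hX.add_of_indepFun hY (indepFun_prod (by fun_prop) (by fun_prop))).measure_ge_le ht
  refine le_of_le_of_eq (by simpa only [mul_comm] using h) ?_
  congr 3
  change 2 * (a ^ 2 * 1 + b ^ 2 * 1) = 2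
  rw [mul_one, mul_one, hab, mul_one]


lemma exp_div_le_gaussianReal_Ici {s : ℝ} (hs : 0 ≤ s) :
    exp (-(s + 1) ^ 2 / 2) / √(2 * π) ≤ (gaussianReal 0 1).real (Set.Ici s) := by
  have hpdf : ∀ x ∈ Set.Icc s (s + 1),
      exp (-(s + 1) ^ 2 / 2) / √(2 * π) ≤ gaussianPDFReal 0 1 x := by
    intro x hx
    rw [gaussianPDFReal, NNReal.coe_one, mul_one, mul_one, sub_zero, div_eq_inv_mul]
    gcongr
    · linarith [hx.1]
    · exact hx.2
  calc exp (-(s + 1) ^ 2 / 2) / √(2 * π)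
      = exp (-(s + 1) ^ 2 / 2) / √(2 * π) * volume.real (Set.Icc s (s + 1)) := by simp
    _ ≤ ∫ x in Set.Icc s (s + 1), gaussianPDFReal 0 1 x :=
      setIntegral_ge_of_const_le_real measurableSet_Icc (by simp) hpdf
        (integrable_gaussianPDFReal 0 1).integrableOn
    _ = (gaussianReal 0 1).real (Set.Icc s (s + 1)) := by
      rw [measureReal_def, gaussianReal_apply_eq_integral 0 one_ne_zero,
        ENNReal.toReal_ofReal (setIntegral_nonneg measurableSet_Icc
          fun x _ ↦ gaussianPDFReal_nonneg 0 1 x)]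
    _ ≤ (gaussianReal 0 1).real (Set.Ici s) := measureReal_mono Set.Icc_subset_Ici_self

end ProbabilityTheory

namespace MeasureTheory

lemma integral_le_add_measureReal_compl {Ω : Type*} [MeasurableSpace Ω] {P : Measure Ω}
    [IsProbabilityMeasure P] {f : Ω → ℝ} {E : Set Ω} {c : ℝ} (hE : MeasurableSet E)
    (hc : 0 ≤ c) (hf : ∀ ω, f ω ≤ 1) (hfE : ∀ ω ∈ E, f ω ≤ c) :
    ∫ ω, f ω ∂P ≤ c + P.real Eᶜ := by
  by_cases hint : Integrable f P
  swap
  · rw [integral_undef hint]; positivity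
  have hle : ∀ ω, f ω ≤ c + Eᶜ.indicator (fun _ ↦ (1 : ℝ)) ω := by
    intro ω
    by_cases hω : ω ∈ E
    · simpa [hω] using hfE ω hω
    · simpa [hω] using (hf ω).trans (le_add_of_nonneg_left hc)
  calc ∫ ω, f ω ∂P ≤ ∫ ω, c + Eᶜ.indicator (fun _ ↦ (1 : ℝ)) ω ∂P :=
        integral_mono hint ((integrable_const c).add
          ((integrable_const 1).indicator hE.compl)) hle
    _ = c + P.real Eᶜ := by
      rw [integral_add (integrable_const c) ((integrable_const 1).indicator hE.compl),
        integral_indicator_const _ hE.compl, integral_const]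
      simp

lemma measureReal_compl_prod_le {α β : Type*} [MeasurableSpace α] [MeasurableSpace β]
    (μ : Measure α) (ν : Measure β) [IsProbabilityMeasure μ] [IsProbabilityMeasure ν]
    (A : Set α) (B : Set β) :
    (μ.prod ν).real (A ×ˢ B)ᶜ ≤ μ.real Aᶜ + ν.real Bᶜ := by
  rw [Set.compl_prod_eq_union]
  refine (measureReal_union_le _ _).trans_eq ?_
  rw [measureReal_prod_prod, measureReal_prod_prod]
  simp

end MeasureTheory

/-- `Re((x₁ + i x₂) · conj π_k)`. -/
def pskProj (K k : ℕ) (x : ℝ × ℝ) : ℝ := x.1 * (psk K k).re + x.2 * (psk K k).im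

section StateEvolution

variable (K m : ℕ) (μ ρ : ℝ)

def seNum (x : ℝ × ℝ) : ℝ :=
  ∑ k ∈ Icc 1 K, (psk K k).re * exp (μ * (psk K k).re + ρ * pskProj K k x)

def seOwn (x : ℝ × ℝ) : ℝ := ∑ a ∈ Icc 1 K, exp (μ * (psk K a).re + ρ * pskProj K a x)

def seInterf (y : (Fin m → ℝ) × (Fin m → ℝ)) : ℝ :=
  ∑ j, ∑ b ∈ Icc 1 K, exp (ρ * pskProj K b (y.1 j, y.2 j))

def seRatio (u : (ℝ × ℝ) × ((Fin m → ℝ) × (Fin m → ℝ))) : ℝ :=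
  seNum K μ ρ u.1 / (seOwn K μ ρ u.1 + seInterf K m ρ u.2)

variable {K m μ ρ}

lemma seOwn_pos (hK : K ≠ 0) (x : ℝ × ℝ) : 0 < seOwn K μ ρ x :=
  sum_pos (fun _ _ ↦ exp_pos _) (nonempty_Icc.mpr (Nat.one_le_iff_ne_zero.mpr hK))

lemma seInterf_nonneg (y : (Fin m → ℝ) × (Fin m → ℝ)) : 0 ≤ seInterf K m ρ y :=
  sum_nonneg fun _ _ ↦ sum_nonneg fun _ _ ↦ (exp_pos _).le

lemma abs_seNum_le (x : ℝ × ℝ) : |seNum K μ ρ x| ≤ seOwn K μ ρ x := by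
  refine (abs_sum_le_sum_abs _ _).trans (sum_le_sum fun k _ ↦ ?_)
  rw [abs_mul, abs_of_pos (exp_pos _)]
  exact mul_le_of_le_one_left (exp_pos _).le (abs_psk_re_le_one K k)

lemma seRatio_le_one (hK : K ≠ 0) (u : (ℝ × ℝ) × ((Fin m → ℝ) × (Fin m → ℝ))) :
    seRatio K m μ ρ u ≤ 1 := by
  have hD : 0 < seOwn K μ ρ u.1 + seInterf K m ρ u.2 :=
    add_pos_of_pos_of_nonneg (seOwn_pos hK u.1) (seInterf_nonneg u.2)
  rw [seRatio, div_le_one hD]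
  exact (le_abs_self _).trans <|
    (abs_seNum_le u.1).trans (le_add_of_nonneg_right (seInterf_nonneg u.2))

lemma seNum_le (hμ : 0 ≤ μ) (hρ : 0 ≤ ρ) {t : ℝ} {x : ℝ × ℝ}
    (hx : ∀ k ∈ Icc 1 K, pskProj K k x ≤ t) : seNum K μ ρ x ≤ K * exp (μ + ρ * t) := by
  calc seNum K μ ρ x ≤ ∑ _k ∈ Icc 1 K, exp (μ + ρ * t) := by
        refine sum_le_sum fun k hk ↦ (mul_le_of_le_one_left (exp_pos _).le
          (psk_re_le_one K k)).trans (exp_le_exp.mpr ?_)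
        gcongr
        · exact mul_le_of_le_one_right hμ (psk_re_le_one K k)
        · exact hx k hk
    _ = K * exp (μ + ρ * t) := by simp

lemma exp_le_seInterf (hK : K ≠ 0) (hρ : 0 ≤ ρ) {s : ℝ} {y : (Fin m → ℝ) × (Fin m → ℝ)}
    (j : Fin m) (hj : s ≤ y.1 j) : exp (ρ * s) ≤ seInterf K m ρ y := by
  have hKmem : K ∈ Icc 1 K := mem_Icc.mpr ⟨Nat.one_le_iff_ne_zero.mpr hK, le_rfl⟩
  calc exp (ρ * s) ≤ exp (ρ * pskProj K K (y.1 j, y.2 j)) := by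
        rw [pskProj, psk_self hK]
        simpa using mul_le_mul_of_nonneg_left hj hρ
    _ ≤ ∑ b ∈ Icc 1 K, exp (ρ * pskProj K b (y.1 j, y.2 j)) :=
        single_le_sum (f := fun b ↦ exp (ρ * pskProj K b (y.1 j, y.2 j)))
          (fun _ _ ↦ (exp_pos _).le) hKmem
    _ ≤ seInterf K m ρ y :=
        single_le_sum (f := fun j ↦ ∑ b ∈ Icc 1 K, exp (ρ * pskProj K b (y.1 j, y.2 j)))
          (fun _ _ ↦ sum_nonneg fun _ _ ↦ (exp_pos _).le) (mem_univ j)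

lemma seRatio_le (hK : K ≠ 0) (hμ : 0 ≤ μ) (hρ : 0 ≤ ρ) {t s : ℝ}
    {u : (ℝ × ℝ) × ((Fin m → ℝ) × (Fin m → ℝ))} (ht : ∀ k ∈ Icc 1 K, pskProj K k u.1 ≤ t)
    (hs : ∃ j, s ≤ u.2.1 j) : seRatio K m μ ρ u ≤ K * exp (μ + ρ * (t - s)) := by
  obtain ⟨j, hj⟩ := hs
  rw [seRatio, div_le_iff₀ (add_pos_of_pos_of_nonneg (seOwn_pos hK u.1) (seInterf_nonneg u.2))]
  calc seNum K μ ρ u.1 ≤ K * exp (μ + ρ * (t - s)) * exp (ρ * s) := by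
        rw [mul_assoc, ← exp_add, mul_sub, add_assoc, sub_add_cancel]
        exact seNum_le hμ hρ ht
    _ ≤ K * exp (μ + ρ * (t - s)) * (seOwn K μ ρ u.1 + seInterf K m ρ u.2) := by
        gcongr
        exact (exp_le_seInterf hK hρ j hj).trans (le_add_of_nonneg_left (seOwn_pos hK u.1).le)

end StateEvolution

lemma measureReal_pskProj_le_compl_le (K : ℕ) {t : ℝ} (ht : 0 ≤ t) :
    ((gaussianReal 0 1).prod (gaussianReal 0 1)).real {x | ∀ k ∈ Icc 1 K, pskProj K k x ≤ t}ᶜ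
      ≤ K * exp (-t ^ 2 / 2) := by
  have hcompl : {x | ∀ k ∈ Icc 1 K, pskProj K k x ≤ t}ᶜ
      ⊆ ⋃ k ∈ Icc 1 K, {x : ℝ × ℝ | t ≤ x.1 * (psk K k).re + x.2 * (psk K k).im} := by
    intro x hx
    simp only [Set.mem_compl_iff, Set.mem_ofPred_eq, not_forall, not_le] at hx
    obtain ⟨k, hk, hlt⟩ := hx
    exact Set.mem_biUnion hk hlt.le
  calc _ ≤ ∑ k ∈ Icc 1 K, ((gaussianReal 0 1).prod (gaussianReal 0 1)).real
          {x : ℝ × ℝ | t ≤ x.1 * (psk K k).re + x.2 * (psk K k).im} :=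
        (measureReal_mono hcompl (measure_ne_top _ _)).trans (measureReal_biUnion_finset_le _ _)
    _ ≤ ∑ _k ∈ Icc 1 K, exp (-t ^ 2 / 2) :=
        sum_le_sum fun k _ ↦ measureReal_mul_add_mul_ge_le (psk_re_sq_add_im_sq K k) ht
    _ = K * exp (-t ^ 2 / 2) := by simp

lemma measureReal_exists_le_compl (m : ℕ) (s : ℝ) :
    ((Measure.pi fun _ : Fin m ↦ gaussianReal 0 1).prod
        (Measure.pi fun _ : Fin m ↦ gaussianReal 0 1)).real {y | ∃ j, s ≤ y.1 j}ᶜ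
      = (gaussianReal 0 1).real (Set.Iio s) ^ m := by
  have hcompl : {y : (Fin m → ℝ) × (Fin m → ℝ) | ∃ j, s ≤ y.1 j}ᶜ
      = Set.univ.pi (fun _ ↦ Set.Iio s) ×ˢ Set.univ := by
    ext y; simp
  rw [hcompl, measureReal_prod_prod, probReal_univ, mul_one, measureReal_def, Measure.pi_pi]
  simp [measureReal_def]

lemma integral_seRatio_le {K m : ℕ} (hK : K ≠ 0) {μ ρ t : ℝ} (hμ : 0 ≤ μ) (hρ : 0 ≤ ρ)
    (ht : 0 ≤ t) (s : ℝ) :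
    ∫ u, seRatio K m μ ρ u ∂(((gaussianReal 0 1).prod (gaussianReal 0 1)).prod
        ((Measure.pi fun _ : Fin m ↦ gaussianReal 0 1).prod
          (Measure.pi fun _ : Fin m ↦ gaussianReal 0 1)))
      ≤ K * exp (μ + ρ * (t - s)) + K * exp (-t ^ 2 / 2)
        + (gaussianReal 0 1).real (Set.Iio s) ^ m := by
  set A : Set (ℝ × ℝ) := {x | ∀ k ∈ Icc 1 K, pskProj K k x ≤ t}
  set B : Set ((Fin m → ℝ) × (Fin m → ℝ)) := {y | ∃ j, s ≤ y.1 j}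
  have hA : MeasurableSet A := by
    simp only [A, Set.ofPred_forall]
    exact MeasurableSet.biInter (Set.to_countable _) fun k _ ↦
      measurableSet_le (by unfold pskProj; fun_prop) measurable_const
  have hB : MeasurableSet B := by
    simp only [B, Set.ofPred_exists]
    exact MeasurableSet.iUnion fun j ↦ measurableSet_le measurable_const (by fun_prop)
  calc _ ≤ K * exp (μ + ρ * (t - s)) + (_ : Measure _).real (A ×ˢ B)ᶜ :=
        integral_le_add_measureReal_compl (hA.prod hB) (by positivity) (seRatio_le_one hK)
          fun u hu ↦ seRatio_le hK hμ hρ hu.1 hu.2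
    _ ≤ K * exp (μ + ρ * (t - s)) + (K * exp (-t ^ 2 / 2)
          + (gaussianReal 0 1).real (Set.Iio s) ^ m) := by
        gcongr
        refine (measureReal_compl_prod_le _ _ A B).trans ?_
        rw [measureReal_exists_le_compl]
        gcongr
        exact measureReal_pskProj_le_compl_le K ht
    _ = _ := by ring

lemma EKM_eq_integral_seRatio (K M : ℕ) (ν : ℝ) :
    EKM K M ν = ∫ u, seRatio K (M - 1) (ν * log (K * M)) √(ν * log (K * M)) u ∂seMeasure M := by
  simp only [EKM, seRatio, seNum, seOwn, seInterf, pskProj, re_mul_conj_psk]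

lemma gaussianReal_Iio_pow_le {s : ℝ} (hs : 0 ≤ s) {m : ℕ} (hm : m ≠ 0) :
    (gaussianReal 0 1).real (Set.Iio s) ^ m ≤ (m * (exp (-(s + 1) ^ 2 / 2) / √(2 * π)))⁻¹ := by
  set p := (gaussianReal 0 1).real (Set.Ici s)
  have hIio : (gaussianReal 0 1).real (Set.Iio s) = 1 - p := by
    rw [← Set.compl_Ici, probReal_compl_eq_one_sub measurableSet_Ici]
  have hqp := exp_div_le_gaussianReal_Ici hs
  calc (gaussianReal 0 1).real (Set.Iio s) ^ m ≤ exp (-p) ^ m := by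
        rw [hIio]
        exact pow_le_pow_left₀ (by rw [← hIio]; exact measureReal_nonneg)
          (one_sub_le_exp_neg p) m
    _ = (exp (m * p))⁻¹ := by rw [← exp_nat_mul, ← exp_neg, neg_mul_eq_mul_neg]
    _ ≤ (m * (exp (-(s + 1) ^ 2 / 2) / √(2 * π)))⁻¹ := by
        have hm0 : (0 : ℝ) < m := by exact_mod_cast Nat.pos_of_ne_zero hm
        gcongr
        exact (mul_le_mul_of_nonneg_left hqp hm0.le).trans
          ((le_add_of_nonneg_right zero_le_one).trans (add_one_le_exp _))

lemma EKM_le_three_terms {K M : ℕ} (hK : K ≠ 0) (hM : 2 ≤ M) {ν t s : ℝ} (hν : 0 ≤ ν) (ht : 0 ≤ t)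
    (hs : 0 ≤ s) :
    EKM K M ν ≤ K * exp (ν * log (K * M) + √(ν * log (K * M)) * (t - s)) + K * exp (-t ^ 2 / 2)
      + ((M - 1) * (exp (-(s + 1) ^ 2 / 2) / √(2 * π)))⁻¹ := by
  have hKM : 1 ≤ (K : ℝ) * M := one_le_mul_of_one_le_of_one_le
    (by exact_mod_cast Nat.one_le_iff_ne_zero.mpr hK) (by exact_mod_cast (by omega : 1 ≤ M))
  rw [EKM_eq_integral_seRatio, seMeasure]
  refine (integral_seRatio_le hK (mul_nonneg hν (log_nonneg hKM)) (sqrt_nonneg _) ht s).trans ?_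
  gcongr
  have h := gaussianReal_Iio_pow_le hs (m := M - 1) (by omega)
  rwa [Nat.cast_sub (by omega), Nat.cast_one] at h

lemma sub_sqrt_mul_le {κ δ ν : ℝ} (hκ : 0 ≤ κ) (hδ : 0 ≤ δ) (hκν : κ ≤ ν) (hν : ν < 2 - δ) :
    ν - √ν * (√2 - 2 * (√κ * δ / 12)) ≤ -(√κ * δ / 12) := by
  have hν0 : 0 ≤ ν := hκ.trans hκν
  have hr2 : √ν ^ 2 = ν := sq_sqrt hν0
  have h22 : √2 ^ 2 = 2 := sq_sqrt zero_le_two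
  have hrκ : √κ ≤ √ν := sqrt_le_sqrt hκν
  have hr2le : √ν ≤ √2 := sqrt_le_sqrt (by linarith)
  have h2le : √2 ≤ 3 / 2 := by nlinarith [sqrt_nonneg 2]
  have hgap : δ ≤ 3 * (√2 - √ν) := by nlinarith [sqrt_nonneg ν]
  have hmargin : √κ * δ ≤ 3 * (√ν * (√2 - √ν)) := by
    calc √κ * δ ≤ √ν * (3 * (√2 - √ν)) := mul_le_mul hrκ hgap hδ (sqrt_nonneg ν)
      _ = 3 * (√ν * (√2 - √ν)) := by ring
  have hθr : √κ * δ / 12 * √ν ≤ √κ * δ / 12 * (3 / 2) :=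
    mul_le_mul_of_nonneg_left (hr2le.trans h2le) (by positivity)
  linarith

lemma add_one_sq_le {θ x : ℝ} (hθ : 0 < θ) (hθ' : θ ≤ 1 / 4) (hx : 0 ≤ x) :
    ((√2 - θ) * √x + 1) ^ 2 / 2 ≤ (1 - θ / 2) * x + (1 / 2 + 1 / θ) := by
  set s := (√2 - θ) * √x
  have h22 : √2 ^ 2 = 2 := sq_sqrt zero_le_two
  have hs2 : s ^ 2 ≤ (2 - 2 * θ) * x := by
    rw [mul_pow, sq_sqrt hx]
    gcongr
    nlinarith [show (7 : ℝ) / 5 ≤ √2 from le_sqrt_of_sq_le (by norm_num)]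
  have hamgm : 2 * s ≤ θ * s ^ 2 / 2 + 2 / θ := by
    have h : θ * s ^ 2 / 2 + 2 / θ - 2 * s = (θ * s - 2) ^ 2 / (2 * θ) := by
      field_simp; ring
    linarith [show 0 ≤ (θ * s - 2) ^ 2 / (2 * θ) by positivity]
  have hquad : (1 + θ / 2) * s ^ 2 ≤ (2 - θ) * x := by
    nlinarith [mul_le_mul_of_nonneg_left hs2 (by positivity : (0 : ℝ) ≤ 1 + θ / 2),
      mul_nonneg (sq_nonneg θ) hx]
  have h2θ : 2 / θ = 2 * (1 / θ) := by ring
  linarith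

lemma EKM_le_mul_rpow {K M : ℕ} (hK : K ≠ 0) (hM : 2 ≤ M) {ν θ : ℝ} (hν : 0 ≤ ν) (hθ : 0 < θ)
    (hθ' : θ ≤ 1 / 4) (hrate : ν - √ν * (√2 - 2 * θ) ≤ -θ) :
    EKM K M ν ≤ K * (2 + 6 * exp (1 / 2 + 1 / θ)) * (M : ℝ) ^ (-(θ ^ 2 / 2)) := by
  set x := log (K * M)
  set c := 1 / 2 + 1 / θ with hc
  have hK1 : (1 : ℝ) ≤ K := by exact_mod_cast Nat.one_le_iff_ne_zero.mpr hK
  have hM2 : (2 : ℝ) ≤ M := by exact_mod_cast hM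
  have hexpx : exp x = K * M := exp_log (by positivity)
  have hlogM : 0 ≤ log M := log_nonneg (by linarith)
  have hx : log M ≤ x := log_le_log (by positivity) (le_mul_of_one_le_left (by positivity) hK1)
  have hdecay : ∀ r, θ ^ 2 / 2 ≤ r → exp (-(r * x)) ≤ (M : ℝ) ^ (-(θ ^ 2 / 2)) := by
    intro r hr
    rw [rpow_def_of_pos (by positivity), exp_le_exp]
    nlinarith [mul_le_mul_of_nonneg_left hx (by positivity : 0 ≤ θ ^ 2 / 2)]
  have hθ2 : θ ^ 2 / 2 ≤ θ / 2 := by nlinarith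
  have hσ : 0 ≤ √2 - θ := by
    nlinarith [show (1 : ℝ) ≤ √2 from one_le_sqrt.mpr one_le_two]
  refine (EKM_le_three_terms hK hM hν (t := θ * √x) (s := (√2 - θ) * √x) (by positivity)
    (by positivity)).trans ?_
  have h1 : exp (ν * x + √(ν * x) * (θ * √x - (√2 - θ) * √x)) ≤ exp (-(θ * x)) := by
    rw [exp_le_exp, sqrt_mul hν]
    have hxx : √x * √x = x := mul_self_sqrt (hlogM.trans hx)
    nlinarith [mul_le_mul_of_nonneg_right hrate (hlogM.trans hx)]
  have h2 : -(θ * √x) ^ 2 / 2 = -(θ ^ 2 / 2 * x) := by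
    rw [mul_pow, sq_sqrt (hlogM.trans hx)]; ring
  have hq : exp (θ / 2 * x) / (6 * K * exp c)
      ≤ (M - 1) * (exp (-((√2 - θ) * √x + 1) ^ 2 / 2) / √(2 * π)) := by
    have hsplit :
        exp (θ / 2 * x) / (6 * K * exp c) = M / 2 * (exp (-((1 - θ / 2) * x + c)) / 3) := by
      rw [show -((1 - θ / 2) * x + c) = θ / 2 * x - x - c by ring, exp_sub, exp_sub, hexpx]
      field_simp
      norm_num
    rw [hsplit]
    gcongr
    · linarith
    · linarith
    · linarith [add_one_sq_le hθ hθ' (hlogM.trans hx), hc]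
    · nlinarith [sq_sqrt (by positivity : (0 : ℝ) ≤ 2 * π), sqrt_nonneg (2 * π), pi_lt_four]
  have h3 : ((M - 1) * (exp (-((√2 - θ) * √x + 1) ^ 2 / 2) / √(2 * π)))⁻¹
      ≤ 6 * K * exp c * exp (-(θ / 2 * x)) := by
    refine (inv_anti₀ (by positivity) hq).trans_eq ?_
    rw [inv_div, exp_neg]; ring
  calc _ ≤ K * (M : ℝ) ^ (-(θ ^ 2 / 2)) + K * (M : ℝ) ^ (-(θ ^ 2 / 2))
        + 6 * K * exp c * (M : ℝ) ^ (-(θ ^ 2 / 2)) := by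
        gcongr
        · exact h1.trans (hdecay θ (by nlinarith))
        · rw [h2]; exact hdecay _ le_rfl
        · exact h3.trans (by gcongr; exact hdecay _ hθ2)
    _ = _ := by ring

open Filter in
theorem EKM_upper_bound_small_nu_general (K : ℕ) (hK : 4 ≤ K)
    (κt : ℝ) (hκ0 : 0 < κt) :
    ∃ αK : ℝ, 0 < αK ∧
      ∀ δt : ℝ, 0 < δt → δt < 1 → κt ≤ 2 - δt →
      ∀ ν : ℝ, κt ≤ ν → ν < 2 - δt →
      ∃ M₀ : ℕ, ∀ M : ℕ, M₀ ≤ M →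
        EKM K M ν ≤ (M : ℝ) ^ (-(αK * δt ^ 2)) := by
  refine ⟨κt / 576, by positivity, fun δt hδ0 hδ1 hκδ ν hνκ hν2 ↦ ?_⟩
  set θ := √κt * δt / 12
  have hθ : 0 < θ := by positivity
  have hθ' : θ ≤ 1 / 4 := by
    have : √κt * δt ≤ 2 * 1 :=
      mul_le_mul (sqrt_le_iff.mpr ⟨zero_le_two, by linarith⟩) hδ1.le hδ0.le zero_le_two
    simp only [θ]; linarith
  set C := K * (2 + 6 * exp (1 / 2 + 1 / θ))
  obtain ⟨M₀, hM₀⟩ := eventually_atTop.mp <|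
    (((tendsto_rpow_atTop (by positivity : 0 < θ ^ 2 / 4)).comp
      tendsto_natCast_atTop_atTop).eventually_ge_atTop C).and (eventually_ge_atTop 2)
  refine ⟨M₀, fun M hM ↦ ?_⟩
  obtain ⟨hCM, hM2⟩ := hM₀ M hM
  have hα : κt / 576 * δt ^ 2 = θ ^ 2 / 4 := by
    rw [div_pow, mul_pow, sq_sqrt hκ0.le]; ring
  calc EKM K M ν ≤ C * (M : ℝ) ^ (-(θ ^ 2 / 2)) :=
        EKM_le_mul_rpow (by omega) hM2 (by linarith) hθ hθ'
          (sub_sqrt_mul_le hκ0.le hδ0.le hνκ hν2)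
    _ ≤ (M : ℝ) ^ (θ ^ 2 / 4) * (M : ℝ) ^ (-(θ ^ 2 / 2)) := by gcongr; exact hCM
    _ = (M : ℝ) ^ (-(κt / 576 * δt ^ 2)) := by
        rw [hα, ← rpow_add (by positivity)]; ring_nf

/-- **Upper bound on `E_{K,M}(ν)` for `ν < 2 − δ̃`** (K ≥ 4 a power of 2). For every
`κ̃ ∈ (0,2)` there is `α_K > 0` (depending only on `K` and `κ̃`) such that for every
`δ̃ ∈ (0,1)` with `κ̃ ≤ 2 − δ̃`, and every `ν ∈ [κ̃, 2 − δ̃)`, for all sufficiently large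
`M`: `E_{K,M}(ν) ≤ M^{−α_K δ̃²}`. -/
theorem EKM_upper_bound_small_nu (K : ℕ) (hK : 4 ≤ K) (hKpow : ∃ m : ℕ, K = 2 ^ m)
    (κt : ℝ) (hκ0 : 0 < κt) (hκ2 : κt < 2) :
    ∃ αK : ℝ, 0 < αK ∧
      ∀ δt : ℝ, 0 < δt → δt < 1 → κt ≤ 2 - δt →
      ∀ ν : ℝ, κt ≤ ν → ν < 2 - δt →
      ∃ M₀ : ℕ, ∀ M : ℕ, M₀ ≤ M →
        EKM K M ν ≤ (M : ℝ) ^ (-(αK * δt ^ 2)) :=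
  EKM_upper_bound_small_nu_general K hK κt hκ0
end
end
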